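/- Let (T̂, {B_x}) be the cut decomposition of a digraph D rooted at s such that T̂ has height d, and let T be an out-tree in D rooted at some vertex r with ℓ leaves. Then D contains an out-tree rooted at s with at least (ℓ - d)/2 leaves. -/

import Mathlib

/-!
Descending the cut decomposition from `s` towards `r`, every diblock `B x` met on the way
contains two internally disjoint paths from `x` to the next bottleneck (or to `r`).
Concatenating them gives two `s`–`r` paths sharing, besides `r`, at most one vertex per level
of the decomposition tree, hence at most `d` vertices. Hanging `T` from either path (add the
arcs of the path, drop the arcs of `T` entering it) gives an out-tree rooted at `s` that loses
only the leaves of `T` lying on the path before `r`. Together the two trees lose at most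
`ℓ + d` leaves, so one of them keeps at least `(ℓ - d) / 2`.
-/

namespace CutPaper

variable {V : Type*}

/-- A directed path in the digraph `A`, given as a nonempty list of distinct
vertices from `u` to `v` with consecutive vertices joined by arcs. -/
def IsPath (A : V → V → Prop) (p : List V) (u v : V) : Prop :=
  p.Chain' A ∧ p.head? = some u ∧ p.getLast? = some v ∧ p.Nodup

/-- `v` is reachable from `u` in the digraph `A`. -/
def Reaches (A : V → V → Prop) (u v : V) : Prop := ∃ p, IsPath A p u v

/-- Two paths from `r` to `v` are internally disjoint: they share only `r` and `v`. -/
def IntDisj (p q : List V) (r v : V) : Prop :=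
  ∀ x, x ∈ p → x ∈ q → x = r ∨ x = v

/-- `v` is bi-reachable from `r`: there are two (distinct) internally
vertex-disjoint paths from `r` to `v`. -/
def BiReachable (A : V → V → Prop) (r v : V) : Prop :=
  ∃ p q, p ≠ q ∧ IsPath A p r v ∧ IsPath A q r v ∧ IntDisj p q r v

/-- The diblock of `r`: bi-reachable vertices together with `r` and its out-neighbours. -/
def diblock (A : V → V → Prop) (r : V) : Set V :=
  {v | BiReachable A r v} ∪ {r} ∪ {v | A r v}

/-- The subdigraph of `A` induced on a vertex set `S`. -/
def Asub (A : V → V → Prop) (S : Set V) : V → V → Prop :=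
  fun u v => A u v ∧ u ∈ S ∧ v ∈ S

/-- The path `p` meets the set `B` for the last time in `x`. -/
def LastTouch (B : Set V) (p : List V) (x : V) : Prop :=
  ∃ p₁ p₂, p = p₁ ++ x :: p₂ ∧ x ∈ B ∧ ∀ y ∈ p₂, y ∉ B

/-- `T` is an out-tree with vertex set `S` and root `r`, as a subdigraph of `A`. -/
structure IsOutTree (A T : V → V → Prop) (S : Set V) (r : V) : Prop where
  sub : ∀ u v, T u v → A u v
  mem : ∀ u v, T u v → u ∈ S ∧ v ∈ S
  root_mem : r ∈ S
  no_in_root : ∀ u, ¬ T u r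
  unique_in : ∀ v ∈ S, v ≠ r → ∃! u, T u v
  reach : ∀ v ∈ S, Reaches T r v

/-- `T` is an in-tree with vertex set `S` and root `r`, as a subdigraph of `A`. -/
def IsInTree (A T : V → V → Prop) (S : Set V) (r : V) : Prop :=
  IsOutTree (fun u v => A v u) (fun u v => T v u) S r

/-- The leaves (vertices of out-degree zero) of an out-tree `T` on vertex set `S`. -/
def leaves (T : V → V → Prop) (S : Set V) : Set V :=
  {v | v ∈ S ∧ ∀ u, ¬ T v u}

/-- The leaves (vertices of in-degree zero) of an in-tree `T` on vertex set `S`. -/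
def inLeaves (T : V → V → Prop) (S : Set V) : Set V :=
  {v | v ∈ S ∧ ∀ u, ¬ T u v}

/-- The raw data of a rooted cut decomposition: a node set, a parent map,
and an assignment of diblocks to nodes. -/
structure PreDecomp (V : Type*) where
  N : Set V
  parent : V → V
  B : V → Set V

/-- One step up the decomposition tree rooted at `r`. -/
def Step (d : PreDecomp V) (r : V) (a b : V) : Prop :=
  a ∈ d.N ∧ a ≠ r ∧ d.parent a = b

/-- `x` is an ancestor (not necessarily proper) of `y` in the decomposition tree. -/
def Anc (d : PreDecomp V) (r : V) (x y : V) : Prop :=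
  Relation.ReflTransGen (Step d r) y x

/-- `y` is a child of `x` in the decomposition tree. -/
def IsChild (d : PreDecomp V) (r : V) (y x : V) : Prop :=
  y ∈ d.N ∧ y ≠ r ∧ d.parent y = x

/-- `B*_x`: the union of the diblocks over the subtree rooted at `x`. -/
def Bstar (d : PreDecomp V) (r : V) (x : V) : Set V :=
  {v | ∃ y ∈ d.N, Anc d r x y ∧ v ∈ d.B y}

/-- The partition class `X_y` of a bottleneck `y` of the diblock of `x`
inside `B*_x`: the vertices below `B x` whose access paths from `x`
leave `B x` for the last time at `y`. -/
def PartClass (A : V → V → Prop) (d : PreDecomp V) (r x y : V) : Set V :=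
  {v | v ∈ Bstar d r x ∧ v ∉ d.B x ∧
    ∀ p, IsPath (Asub A (Bstar d r x)) p x v → LastTouch (d.B x) p y}

/-- `d` is the `r`-rooted cut decomposition of the digraph `A`:
the tree is well-founded towards the root `r`, the diblocks cover all vertices,
each `B x` is the diblock of `x` in the subdigraph induced on `B*_x`,
the children of `x` are exactly the bottlenecks of `B x`, and the subtree of a
child `y` spans exactly `{y}` together with the partition class of `y`. -/
structure IsCutDecomp (A : V → V → Prop) (r : V) (d : PreDecomp V) : Prop where
  root_mem : r ∈ d.N
  parent_mem : ∀ x ∈ d.N, x ≠ r → d.parent x ∈ d.N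
  tree : ∀ x ∈ d.N, Anc d r r x
  cover : Bstar d r r = Set.univ
  diblock_eq : ∀ x ∈ d.N, d.B x = diblock (Asub A (Bstar d r x)) x
  child_iff : ∀ x ∈ d.N, ∀ y,
    IsChild d r y x ↔ (y ∈ d.B x ∧ y ≠ x ∧ (PartClass A d r x y).Nonempty)
  child_part : ∀ x ∈ d.N, ∀ y, IsChild d r y x →
    Bstar d r y = insert y (PartClass A d r x y)

theorem isPath_singleton (A : V → V → Prop) (x : V) : IsPath A [x] x x :=
  ⟨.singleton x, rfl, rfl, List.nodup_singleton x⟩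

theorem isPath_pair {A : V → V → Prop} {u v : V} (huv : A u v) (hne : u ≠ v) :
    IsPath A [u, v] u v :=
  ⟨List.isChain_pair.2 huv, rfl, rfl, by simpa using hne⟩

theorem IsPath.mono {A A' : V → V → Prop} (hA : ∀ u v, A u v → A' u v) {p : List V} {x v : V}
    (hp : IsPath A p x v) : IsPath A' p x v :=
  ⟨hp.1.imp hA, hp.2⟩

section IsPath

variable {A : V → V → Prop} {p : List V} {x v : V}

theorem IsPath.isChain (hp : IsPath A p x v) : p.IsChain A := hp.1

theorem IsPath.head?_eq (hp : IsPath A p x v) : p.head? = some x := hp.2.1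

theorem IsPath.getLast?_eq (hp : IsPath A p x v) : p.getLast? = some v := hp.2.2.1

theorem IsPath.nodup (hp : IsPath A p x v) : p.Nodup := hp.2.2.2

theorem IsPath.head_mem (hp : IsPath A p x v) : x ∈ p := List.mem_of_mem_head? hp.head?_eq

theorem IsPath.getLast_mem (hp : IsPath A p x v) : v ∈ p := List.mem_of_mem_getLast? hp.getLast?_eq

theorem IsPath.exists_eq_cons (hp : IsPath A p x v) : ∃ t, p = x :: t := by
  obtain ⟨_, hx, _, _⟩ := hp
  cases p with
  | nil => simp at hx
  | cons a t => exact ⟨t, by simpa using hx⟩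

theorem IsPath.prefix {l₁ l₂ : List V} {w : V} (hp : IsPath A p x v) (hd : p = l₁ ++ w :: l₂) :
    IsPath A (l₁ ++ [w]) x w := by
  obtain ⟨hc, hx, _, hn⟩ := hp
  have hpre : l₁ ++ [w] <+: p := ⟨l₂, by simp [hd]⟩
  refine ⟨hc.prefix hpre, ?_, List.getLast?_concat .., hn.sublist hpre.sublist⟩
  subst hd
  cases l₁ <;> simpa using hx

theorem IsPath.append {y : V} {t : List V} (hp : IsPath A p x y) (hq : IsPath A (y :: t) y v)
    (hdisj : ∀ z ∈ p, z ∉ t) : IsPath A (p ++ t) x v := by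
  obtain ⟨hpc, hpx, hpy, hpn⟩ := hp
  obtain ⟨hqc, -, hqv, hqn⟩ := hq
  cases t with
  | nil =>
    obtain rfl : y = v := by simpa using hqv
    rw [List.append_nil]
    exact ⟨hpc, hpx, hpy, hpn⟩
  | cons c t =>
    refine ⟨hpc.append hqc.tail ?_, by simp [List.head?_append, hpx], ?_,
      hpn.append (List.nodup_cons.1 hqn).2 fun a ha hb => hdisj a ha hb⟩
    · simpa [hpy] using (List.isChain_cons_cons.1 hqc).1
    · simpa [List.getLast?_append] using hqv

theorem reflTransGen_of_isPath (hp : IsPath A p x v) : Relation.ReflTransGen A x v := by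
  obtain ⟨t, rfl⟩ := hp.exists_eq_cons
  exact List.relationReflTransGen_of_exists_isChain_cons t hp.isChain
    ((List.getLast_eq_iff_getLast?_eq_some _).2 hp.getLast?_eq)

theorem reaches_of_reflTransGen (h : Relation.ReflTransGen A x v) : Reaches A x v := by
  induction h with
  | refl => exact ⟨_, isPath_singleton A x⟩
  | @tail u w _ huw ih =>
    obtain ⟨p, hp⟩ := ih
    by_cases hw : w ∈ p
    · obtain ⟨l₁, l₂, hd⟩ := List.append_of_mem hw
      exact ⟨_, hp.prefix hd⟩
    · have huw' : u ≠ w := fun h => hw (h ▸ hp.getLast_mem)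
      exact ⟨p ++ [w], hp.append (isPath_pair huw huw')
        fun z hz hzw => hw (List.mem_singleton.1 hzw ▸ hz)⟩

theorem mem_of_isChain_asub {S : Set V} {a : V} {l : List V} (h : (a :: l).IsChain (Asub A S))
    {b : V} (hb : b ∈ l) : b ∈ S := by
  induction l generalizing a with
  | nil => simp at hb
  | cons c l ih =>
    rw [List.isChain_cons_cons] at h
    rcases List.mem_cons.1 hb with rfl | hb
    exacts [h.1.2.2, ih h.2 hb]

theorem exists_two_paths_of_mem_diblock {r : V} (hv : v ∈ diblock A r) :
    ∃ p q, IsPath A p r v ∧ IsPath A q r v ∧ IntDisj p q r v := by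
  by_cases hvr : v = r
  · subst hvr
    exact ⟨[v], [v], isPath_singleton A v, isPath_singleton A v, by simp [IntDisj]⟩
  rcases hv with (⟨p, q, -, hpq⟩ | hvr') | hrv
  · exact ⟨p, q, hpq⟩
  · exact absurd hvr' hvr
  · exact ⟨_, _, isPath_pair hrv (Ne.symm hvr), isPath_pair hrv (Ne.symm hvr), by simp [IntDisj]⟩

end IsPath

def PathArc (p : List V) (u w : V) : Prop :=
  ∃ i, ∃ h : i + 1 < p.length, p[i] = u ∧ p[i + 1] = w

section PathArc

variable {p : List V} {u u' v w x : V}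

theorem PathArc.mem_left (h : PathArc p u w) : u ∈ p := by
  obtain ⟨i, hi, rfl, -⟩ := h
  exact List.getElem_mem _

theorem PathArc.mem_right (h : PathArc p u w) : w ∈ p := by
  obtain ⟨i, hi, -, rfl⟩ := h
  exact List.getElem_mem _

theorem PathArc.rel {A : V → V → Prop} (hc : p.IsChain A) (h : PathArc p u w) : A u w := by
  obtain ⟨i, hi, rfl, rfl⟩ := h
  exact List.isChain_iff_getElem.1 hc i hi

theorem PathArc.left_unique (hn : p.Nodup) (h : PathArc p u w) (h' : PathArc p u' w) :
    u = u' := by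
  obtain ⟨i, hi, rfl, hw⟩ := h
  obtain ⟨j, hj, rfl, rfl⟩ := h'
  obtain rfl : i = j := by simpa using (hn.getElem_inj_iff).1 hw
  rfl

theorem not_pathArc_head (hn : p.Nodup) (hx : p.head? = some x) : ¬ PathArc p u x := by
  rintro ⟨i, hi, -, hix⟩
  rw [List.head?_eq_getElem?, List.getElem?_eq_some_iff] at hx
  obtain ⟨h0, hx⟩ := hx
  exact absurd ((hn.getElem_inj_iff).1 (hix.trans hx.symm)) (by omega)

theorem not_pathArc_getLast (hn : p.Nodup) (hv : p.getLast? = some v) : ¬ PathArc p v w := by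
  rintro ⟨i, hi, hiv, -⟩
  rw [List.getLast?_eq_getElem?, List.getElem?_eq_some_iff] at hv
  obtain ⟨hl, hv⟩ := hv
  exact absurd ((hn.getElem_inj_iff).1 (hiv.trans hv.symm)) (by omega)

theorem exists_pathArc_of_mem (hx : p.head? = some x) (hv : v ∈ p) (hvx : v ≠ x) :
    ∃ u, PathArc p u v := by
  obtain ⟨j, hj, rfl⟩ := List.mem_iff_getElem.1 hv
  rw [List.head?_eq_getElem?, List.getElem?_eq_some_iff] at hx
  obtain ⟨h0, rfl⟩ := hx
  obtain ⟨i, rfl⟩ : ∃ i, j = i + 1 := Nat.exists_eq_succ_of_ne_zero (by rintro rfl; exact hvx rfl)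
  exact ⟨_, i, hj, rfl, rfl⟩

theorem reflTransGen_pathArc_of_mem (hx : p.head? = some x) (hv : v ∈ p) :
    Relation.ReflTransGen (PathArc p) x v := by
  obtain ⟨j, hj, rfl⟩ := List.mem_iff_getElem.1 hv
  rw [List.head?_eq_getElem?, List.getElem?_eq_some_iff] at hx
  obtain ⟨h0, rfl⟩ := hx
  clear hv
  induction j with
  | zero => rfl
  | succ i ih => exact (ih (by omega)).tail ⟨i, hj, rfl, rfl⟩

end PathArc

def rerootArc (T : V → V → Prop) (p : List V) (u w : V) : Prop :=
  PathArc p u w ∨ (T u w ∧ w ∉ p)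

section Reroot

variable {A T : V → V → Prop} {S : Set V} {p : List V} {r x : V}

theorem IsOutTree.reflTransGen_rerootArc (hT : IsOutTree A T S r) (hp : IsPath A p x r)
    {v : V} (hv : v ∈ S ∪ {w | w ∈ p}) : Relation.ReflTransGen (rerootArc T p) x v := by
  have of_mem : ∀ w ∈ p, Relation.ReflTransGen (rerootArc T p) x w := fun w hw =>
    Relation.ReflTransGen.mono (fun _ _ => Or.inl) _ _ (reflTransGen_pathArc_of_mem hp.head?_eq hw)
  have of_T : ∀ w, Relation.ReflTransGen T r w → Relation.ReflTransGen (rerootArc T p) x w := by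
    intro w hw
    induction hw with
    | refl => exact of_mem r (hp.getLast_mem)
    | @tail u w _ huw ih =>
      by_cases hw : w ∈ p
      · exact of_mem w hw
      · exact ih.tail (Or.inr ⟨huw, hw⟩)
  rcases hv with hv | hv
  · obtain ⟨q, hq⟩ := hT.reach v hv
    exact of_T v (reflTransGen_of_isPath hq)
  · exact of_mem v hv

theorem IsOutTree.reroot (hT : IsOutTree A T S r) (hp : IsPath A p x r) :
    IsOutTree A (rerootArc T p) (S ∪ {w | w ∈ p}) x where
  sub u w := by
    rintro (h | ⟨h, -⟩)
    exacts [h.rel hp.isChain, hT.sub u w h]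
  mem u w := by
    rintro (h | ⟨h, -⟩)
    exacts [⟨Or.inr h.mem_left, Or.inr h.mem_right⟩,
      ⟨Or.inl (hT.mem u w h).1, Or.inl (hT.mem u w h).2⟩]
  root_mem := Or.inr (hp.head_mem)
  no_in_root u := by
    rintro (h | ⟨-, hx⟩)
    exacts [not_pathArc_head hp.nodup hp.head?_eq h, hx (hp.head_mem)]
  unique_in v hv hvx := by
    by_cases hvp : v ∈ p
    · obtain ⟨u, hu⟩ := exists_pathArc_of_mem hp.head?_eq hvp hvx
      refine ⟨u, Or.inl hu, ?_⟩
      rintro u' (h | ⟨-, hv'⟩)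
      exacts [h.left_unique hp.nodup hu, absurd hvp hv']
    · have hvr : v ≠ r := by
        rintro rfl
        exact hvp (hp.getLast_mem)
      obtain ⟨u, hu, huniq⟩ := hT.unique_in v (hv.resolve_right hvp) hvr
      refine ⟨u, Or.inr ⟨hu, hvp⟩, ?_⟩
      rintro u' (h | ⟨h, -⟩)
      exacts [absurd h.mem_right hvp, huniq u' h]
  reach v hv := reaches_of_reflTransGen (hT.reflTransGen_rerootArc hp hv)

theorem leaves_sdiff_subset_leaves_rerootArc (hn : p.Nodup) (hr : p.getLast? = some r) :
    leaves T S \ {w | w ∈ p ∧ w ≠ r} ⊆ leaves (rerootArc T p) (S ∪ {w | w ∈ p}) := by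
  rintro v ⟨⟨hvS, hleaf⟩, hvp⟩
  refine ⟨Or.inl hvS, ?_⟩
  rintro u (h | ⟨h, -⟩)
  · obtain rfl : v = r := by
      by_contra hvr
      exact hvp ⟨h.mem_left, hvr⟩
    exact not_pathArc_getLast hn hr h
  · exact hleaf u h

end Reroot

theorem ncard_sub_ncard_inter_le_ncard_sdiff_add_ncard_sdiff {α : Type*} (L P Q : Set α)
    (hPQ : (P ∩ Q).Finite) : L.ncard - (P ∩ Q).ncard ≤ (L \ P).ncard + (L \ Q).ncard :=
  calc L.ncard - (P ∩ Q).ncard ≤ (L \ (P ∩ Q)).ncard := Set.le_ncard_sdiff _ _ hPQ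
    _ = (L \ P ∪ L \ Q).ncard := by rw [Set.sdiff_inter]
    _ ≤ (L \ P).ncard + (L \ Q).ncard := Set.ncard_union_le _ _

theorem finite_setOf_mem_ne (l : List V) (v : V) : {w | w ∈ l ∧ w ≠ v}.Finite :=
  l.finite_toSet.subset fun _ hw => hw.1

def SubtreeHeightLE (d : PreDecomp V) (s x : V) (n : ℕ) : Prop :=
  ∀ q : List V, q.IsChain (fun a b => IsChild d s b a) → q.head? = some x → q.length ≤ n

section CutDecomp

variable {A : V → V → Prop} {s x y v : V} {d : PreDecomp V}

theorem SubtreeHeightLE.not_zero : ¬ SubtreeHeightLE d s x 0 := fun h => by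
  simpa using h [x] (.singleton x) rfl

theorem SubtreeHeightLE.of_isChild {n : ℕ} (h : SubtreeHeightLE d s x (n + 1))
    (hyx : IsChild d s y x) : SubtreeHeightLE d s y n := by
  intro q hq hqy
  cases q with
  | nil => simp at hqy
  | cons a t =>
    obtain rfl : a = y := by simpa using hqy
    simpa using h (x :: a :: t) (hq.cons_cons hyx) rfl

theorem Bstar_subset_Bstar_of_isChild (hyx : IsChild d s y x) : Bstar d s y ⊆ Bstar d s x :=
  fun _ ⟨z, hz, hyz, hvz⟩ => ⟨z, hz, hyz.tail hyx, hvz⟩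

theorem exists_isChild_mem_Bstar (hv : v ∈ Bstar d s x) (hvB : v ∉ d.B x) :
    ∃ y, IsChild d s y x ∧ v ∈ Bstar d s y := by
  obtain ⟨z, hz, hxz, hvz⟩ := hv
  rcases hxz.cases_tail with rfl | ⟨y, hyz, hyx⟩
  · exact absurd hvz hvB
  · exact ⟨y, hyx, z, hz, hyz, hvz⟩

namespace IsCutDecomp

variable (h : IsCutDecomp A s d)
include h

/- A vertex of the partition class of `y` is reached from `x` only through `y`, so on a path
ending at `y` it would have to come after `y`. -/
theorem eq_of_mem_path_of_mem_Bstar {p : List V} (hx : x ∈ d.N) (hyx : IsChild d s y x)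
    (hp : IsPath (Asub A (Bstar d s x)) p x y) {w : V} (hw : w ∈ p) (hwy : w ∈ Bstar d s y) :
    w = y := by
  by_contra hne
  rw [h.child_part x hx y hyx] at hwy
  obtain ⟨l₁, l₂, hd⟩ := List.append_of_mem hw
  obtain ⟨q₁, q₂, hq, -, -⟩ := (hwy.resolve_left hne).2.2 _ (hp.prefix hd)
  have hy₁ : y ∈ l₁ := by
    have : y ∈ l₁ ++ [w] := by simp [hq]
    simpa [Ne.symm hne] using this
  have hy₂ : y ∈ w :: l₂ := List.mem_of_mem_getLast? <| by
    rw [← List.getLast?_append_of_ne_nil l₁ (List.cons_ne_nil _ _), ← hd]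
    exact hp.getLast?_eq
  exact List.disjoint_of_nodup_append (hd ▸ hp.nodup) hy₁ hy₂

theorem isPath_append_of_isChild {p t : List V} (hx : x ∈ d.N) (hyx : IsChild d s y x)
    (hp : IsPath (Asub A (Bstar d s x)) p x y) (hq : IsPath (Asub A (Bstar d s y)) (y :: t) y v) :
    IsPath (Asub A (Bstar d s x)) (p ++ t) x v := by
  have hsub := Bstar_subset_Bstar_of_isChild hyx
  refine hp.append (hq.mono fun _ _ huv => ⟨huv.1, hsub huv.2.1, hsub huv.2.2⟩) fun z hz hzt => ?_
  obtain rfl := h.eq_of_mem_path_of_mem_Bstar hx hyx hp hz (mem_of_isChain_asub hq.isChain hzt)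
  exact (List.nodup_cons.1 hq.nodup).1 hzt

theorem exists_two_paths_of_isChild {p' q' : List V} (hx : x ∈ d.N) (hyx : IsChild d s y x)
    (hvy : v ≠ y) (hp' : IsPath (Asub A (Bstar d s y)) p' y v)
    (hq' : IsPath (Asub A (Bstar d s y)) q' y v) :
    ∃ p q, IsPath (Asub A (Bstar d s x)) p x v ∧ IsPath (Asub A (Bstar d s x)) q x v ∧
      {w | w ∈ p ∧ w ≠ v} ∩ {w | w ∈ q ∧ w ≠ v} ⊆
        insert x ({w | w ∈ p' ∧ w ≠ v} ∩ {w | w ∈ q' ∧ w ≠ v}) := by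
  obtain ⟨t, rfl⟩ := hp'.exists_eq_cons
  obtain ⟨t', rfl⟩ := hq'.exists_eq_cons
  have hyB : y ∈ diblock (Asub A (Bstar d s x)) x :=
    h.diblock_eq x hx ▸ ((h.child_iff x hx y).1 hyx).1
  obtain ⟨p₀, q₀, hp₀, hq₀, hdisj⟩ := exists_two_paths_of_mem_diblock hyB
  refine ⟨p₀ ++ t, q₀ ++ t', h.isPath_append_of_isChild hx hyx hp₀ hp',
    h.isPath_append_of_isChild hx hyx hq₀ hq', ?_⟩
  have hy : y ∈ {w | w ∈ y :: t ∧ w ≠ v} ∩ {w | w ∈ y :: t' ∧ w ≠ v} :=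
    ⟨⟨List.mem_cons_self, hvy.symm⟩, ⟨List.mem_cons_self, hvy.symm⟩⟩
  rintro w ⟨⟨hwp, hwv⟩, ⟨hwq, -⟩⟩
  rcases List.mem_append.1 hwp with hwp | hwt <;> rcases List.mem_append.1 hwq with hwq | hwt'
  · rcases hdisj w hwp hwq with rfl | rfl
    exacts [Set.mem_insert _ _, Set.mem_insert_of_mem _ hy]
  · obtain rfl :=
      h.eq_of_mem_path_of_mem_Bstar hx hyx hp₀ hwp (mem_of_isChain_asub hq'.isChain hwt')
    exact Set.mem_insert_of_mem _ hy
  · obtain rfl :=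
      h.eq_of_mem_path_of_mem_Bstar hx hyx hq₀ hwq (mem_of_isChain_asub hp'.isChain hwt)
    exact Set.mem_insert_of_mem _ hy
  · exact Set.mem_insert_of_mem _
      ⟨⟨List.mem_cons_of_mem _ hwt, hwv⟩, ⟨List.mem_cons_of_mem _ hwt', hwv⟩⟩

theorem exists_two_paths {n : ℕ} (hn : SubtreeHeightLE d s x n) (hx : x ∈ d.N)
    (hv : v ∈ Bstar d s x) :
    ∃ p q, IsPath (Asub A (Bstar d s x)) p x v ∧ IsPath (Asub A (Bstar d s x)) q x v ∧
      ({w | w ∈ p ∧ w ≠ v} ∩ {w | w ∈ q ∧ w ≠ v}).ncard ≤ n := by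
  induction n generalizing x with
  | zero => exact absurd hn SubtreeHeightLE.not_zero
  | succ n ih =>
    by_cases hvB : v ∈ d.B x
    · obtain ⟨p, q, hp, hq, hdisj⟩ := exists_two_paths_of_mem_diblock (h.diblock_eq x hx ▸ hvB)
      refine ⟨p, q, hp, hq, ?_⟩
      calc _ ≤ ({x} : Set V).ncard :=
            Set.ncard_le_ncard fun w hw => (hdisj w hw.1.1 hw.2.1).resolve_right hw.1.2
        _ ≤ n + 1 := by simp
    · obtain ⟨y, hyx, hvY⟩ := exists_isChild_mem_Bstar hv hvB
      obtain ⟨p', q', hp', hq', hcard⟩ := ih (hn.of_isChild hyx) hyx.1 hvY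
      have hvy : v ≠ y := by
        rintro rfl
        exact hvB ((h.child_iff x hx v).1 hyx).1
      obtain ⟨p, q, hp, hq, hsub⟩ := h.exists_two_paths_of_isChild hx hyx hvy hp' hq'
      refine ⟨p, q, hp, hq, ?_⟩
      calc _ ≤ (insert x ({w | w ∈ p' ∧ w ≠ v} ∩ {w | w ∈ q' ∧ w ≠ v})).ncard :=
            Set.ncard_le_ncard hsub (((finite_setOf_mem_ne p' v).inter_of_left _).insert x)
        _ ≤ _ + 1 := Set.ncard_insert_le _ _
        _ ≤ n + 1 := by omega

end IsCutDecomp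

end CutDecomp

theorem cutDecomp_bounded_height_reroot_general {V : Type*} [Fintype V]
    (A : V → V → Prop) (s : V)
    (d : PreDecomp V) (h : IsCutDecomp A s d) (dh : ℕ)
    (hheight : ∀ q : List V, List.Chain' (fun a b => IsChild d s b a) q →
      q.head? = some s → q.length ≤ dh)
    (T : V → V → Prop) (S : Set V) (r : V) (ℓ : ℕ)
    (hT : IsOutTree A T S r) (hl : (leaves T S).ncard = ℓ) :
    ∃ (T' : V → V → Prop) (S' : Set V),
      IsOutTree A T' S' s ∧ (ℓ - dh) / 2 ≤ (leaves T' S').ncard := by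
  obtain ⟨p, q, hp, hq, hpq⟩ := h.exists_two_paths hheight h.root_mem (v := r) (by simp [h.cover])
  have hcount := ncard_sub_ncard_inter_le_ncard_sdiff_add_ncard_sdiff (leaves T S)
    {w | w ∈ p ∧ w ≠ r} {w | w ∈ q ∧ w ≠ r} ((finite_setOf_mem_ne p r).inter_of_left _)
  have hp' := Set.ncard_le_ncard (leaves_sdiff_subset_leaves_rerootArc (T := T) (S := S)
    hp.nodup hp.getLast?_eq) (Set.toFinite _)
  have hq' := Set.ncard_le_ncard (leaves_sdiff_subset_leaves_rerootArc (T := T) (S := S)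
    hq.nodup hq.getLast?_eq) (Set.toFinite _)
  rcases le_total (leaves (rerootArc T p) (S ∪ {w | w ∈ p})).ncard
    (leaves (rerootArc T q) (S ∪ {w | w ∈ q})).ncard with hle | hle
  · exact ⟨_, _, hT.reroot (hq.mono fun _ _ huv => huv.1), by omega⟩
  · exact ⟨_, _, hT.reroot (hp.mono fun _ _ huv => huv.1), by omega⟩

/-- if the decomposition tree rooted at `s` has height at most
`dh` (at most `dh` nodes on every root-to-leaf path), then any out-tree with
`ℓ` leaves yields an out-tree rooted at `s` with at least `(ℓ - dh)/2`
leaves. -/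
theorem cutDecomp_bounded_height_reroot {V : Type*} [Fintype V]
    (A : V → V → Prop) (s : V) (hreach : ∀ v, Reaches A s v)
    (d : PreDecomp V) (h : IsCutDecomp A s d) (dh : ℕ)
    (hheight : ∀ q : List V, List.Chain' (fun a b => IsChild d s b a) q →
      q.head? = some s → q.length ≤ dh)
    (T : V → V → Prop) (S : Set V) (r : V) (ℓ : ℕ)
    (hT : IsOutTree A T S r) (hl : (leaves T S).ncard = ℓ) :
    ∃ (T' : V → V → Prop) (S' : Set V),
      IsOutTree A T' S' s ∧ (ℓ - dh) / 2 ≤ (leaves T' S').ncard :=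
  cutDecomp_bounded_height_reroot_general A s d h dh hheight T S r ℓ hT hl

end CutPaper
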